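/- Suppose z and t are vertices of a horoball H of the Groves–Manning space X with 𝒟(z) = 𝒟(t) = m ≥ δ. If d(z,t) ≤ 2n + 3 then d^m(z,t) ≤ 3·2ⁿ, and if d(z,t) ≤ 2n + 2 then d^m(z,t) ≤ 2^{n+1}; consequently B_{2n+3}(z) ∩ H(m) ⊆ B̂_{3·2ⁿ}(z) and B_{2n+2}(z) ∩ H(m) ⊆ B̂_{2^{n+1}}(z). In particular, for any integer k > 0, B_k(z) ∩ H(m) ⊆ B̂_{2^{⌊k/2⌋+1}}(z). -/

import Mathlib

/-! Core definitions: Cayley graphs, combinatorial horoballs, and the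
Groves–Manning space of a relatively hyperbolic pair, as a locally finite graph. -/

open SimpleGraph

namespace GM

variable {G : Type} [Group G] {ι : Type}

/-- Adjacency in the Cayley graph of `G` with respect to the symmetrized set `S`. -/
def cayleyAdj (S : Set G) (a b : G) : Prop :=
  a ≠ b ∧ (a⁻¹ * b ∈ S ∨ b⁻¹ * a ∈ S)

/-- The Cayley graph of `G` with respect to `S`. -/
def cayleyGraph (S : Set G) : SimpleGraph G where
  Adj := cayleyAdj S
  symm := ⟨by rintro a b ⟨h1, h2⟩; exact ⟨h1.symm, h2.symm⟩⟩
  loopless := ⟨fun a h => h.1 rfl⟩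

/-- The full subgraph of the Cayley graph on the left cosets of `P i`
(the union over all cosets; distinct cosets lie in distinct components). -/
def cosetGraph (S : Set G) (P : ι → Subgroup G) (i : ι) : SimpleGraph G where
  Adj a b := cayleyAdj S a b ∧ a⁻¹ * b ∈ P i
  symm := ⟨by
    rintro a b ⟨⟨h0, h1⟩, h2⟩
    refine ⟨⟨h0.symm, h1.symm⟩, ?_⟩
    have := (P i).inv_mem h2
    simpa [mul_inv_rev] using this⟩
  loopless := ⟨fun a h => h.1.1 rfl⟩

/-- Vertices of the Groves–Manning space: the group `G` (depth 0), together with,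
for each `i : ι` and `g : G`, a vertex `(g, k)` at depth `k ≥ 1` in the combinatorial
horoball over the coset `g • (P i)`. -/
def GMVert (G ι : Type) : Type := G ⊕ (ι × G × ℕ+)

/-- The depth function `𝒟` on vertices. -/
def depth : GMVert G ι → ℕ
  | .inl _ => 0
  | .inr (_, _, k) => (k : ℕ)

/-- The underlying group element ("base") of a vertex. -/
def baseElt : GMVert G ι → G
  | .inl g => g
  | .inr (_, g, _) => g

/-- The vertex over `g` at depth `l` in the horoballs for the subgroup `P i`. -/
def atLevel (i : ι) (g : G) : ℕ → GMVert G ι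
  | 0 => .inl g
  | (l + 1) => .inr (i, g, ⟨l + 1, Nat.succ_pos l⟩)

/-- Horizontal adjacency at depth `k ≥ 1` inside a horoball: two distinct elements of a
common left coset of `P i` whose distance in the coset graph is at most `2 ^ k`. -/
def horizAdjPos (S : Set G) (P : ι → Subgroup G) (i : ι) (k : ℕ) (a b : G) : Prop :=
  a ≠ b ∧ a⁻¹ * b ∈ P i ∧ (cosetGraph S P i).Reachable a b ∧ (cosetGraph S P i).dist a b ≤ 2 ^ k

/-- Horizontal adjacency at depth `l` (at depth `0` this is an edge of the coset graph). -/
def hAdjL (S : Set G) (P : ι → Subgroup G) (i : ι) (l : ℕ) (a b : G) : Prop :=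
  match l with
  | 0 => (cosetGraph S P i).Adj a b
  | (m + 1) => horizAdjPos S P i (m + 1) a b

/-- Adjacency in the Groves–Manning space: Cayley edges at depth 0, vertical edges
joining `(g, k)` to `(g, k+1)`, and horizontal horoball edges. -/
def gmAdj (S : Set G) (P : ι → Subgroup G) : GMVert G ι → GMVert G ι → Prop
  | .inl a, .inl b => cayleyAdj S a b
  | .inl a, .inr (_, b, k) => a = b ∧ (k : ℕ) = 1
  | .inr (_, a, k), .inl b => a = b ∧ (k : ℕ) = 1
  | .inr (i, a, k), .inr (j, b, l) =>
      i = j ∧ ((a = b ∧ ((l : ℕ) = (k : ℕ) + 1 ∨ (k : ℕ) = (l : ℕ) + 1)) ∨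
        ((k : ℕ) = (l : ℕ) ∧ horizAdjPos S P i (k : ℕ) a b))

/-- The (1-skeleton of the) Groves–Manning space of `(G, {P i}, S)`. -/
def GMGraph (S : Set G) (P : ι → Subgroup G) : SimpleGraph (GMVert G ι) where
  Adj := gmAdj S P
  symm := ⟨by
    rintro (a | ⟨i, a, k⟩) (b | ⟨j, b, l⟩) h
    · exact ⟨h.1.symm, h.2.symm⟩
    · exact ⟨h.1.symm, h.2⟩
    · exact ⟨h.1.symm, h.2⟩
    · obtain ⟨rfl, (⟨rfl, hv⟩ | ⟨hk, hh⟩)⟩ := h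
      · exact ⟨rfl, Or.inl ⟨rfl, hv.symm⟩⟩
      · refine ⟨rfl, Or.inr ⟨hk.symm, hh.1.symm, ?_, hh.2.2.1.symm, ?_⟩⟩
        · have := (P i).inv_mem hh.2.1; simpa [mul_inv_rev] using this
        · rw [SimpleGraph.dist_comm, ← hk]; exact hh.2.2.2⟩
  loopless := ⟨by
    rintro (a | ⟨i, a, k⟩) h
    · exact h.1 rfl
    · obtain ⟨-, (⟨-, hv⟩ | ⟨-, hh⟩)⟩ := h
      · omega
      · exact hh.1 rfl⟩

variable (S : Set G) (P : ι → Subgroup G)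

/-- The identity vertex `*` of the Groves–Manning space. -/
def idv : GMVert G ι := Sum.inl 1

/-- The ball `B_r(c)` of radius `r` about `c`, in the edge-path metric of the
Groves–Manning space. -/
def gball (c : GMVert G ι) (r : ℕ) : Set (GMVert G ι) :=
  {v | (GMGraph S P).dist c v ≤ r}

/-- The horoball over the coset `t • (P i)`. -/
def horoball (i : ι) (t : G) : Set (GMVert G ι) :=
  fun v => match v with
  | .inl g => t⁻¹ * g ∈ P i
  | .inr (j, g, _) => j = i ∧ t⁻¹ * g ∈ P i

/-- `H(m)`: the vertices of the horoball at depth exactly `m`. -/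
def horoSphere (i : ι) (t : G) (m : ℕ) : Set (GMVert G ι) :=
  {v | v ∈ horoball P i t ∧ depth v = m}

/-- `H^m`: the `m`-horoball, all vertices of the horoball at depth at least `m`. -/
def horoDeep (i : ι) (t : G) (m : ℕ) : Set (GMVert G ι) :=
  {v | v ∈ horoball P i t ∧ m ≤ depth v}

/-- A walk is geodesic if its length realizes the graph distance of its endpoints. -/
def IsGeodesic {V : Type} (Γ : SimpleGraph V) {a b : V} (p : Γ.Walk a b) : Prop :=
  p.length = Γ.dist a b

/-- `Γ` is `δ`-hyperbolic: all geodesic triangles are `δ`-slim. -/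
def SlimTriangles {V : Type} (Γ : SimpleGraph V) (δ : ℕ) : Prop :=
  ∀ ⦃a b c : V⦄ (p : Γ.Walk a b) (q : Γ.Walk b c) (r : Γ.Walk a c),
    IsGeodesic Γ p → IsGeodesic Γ q → IsGeodesic Γ r →
    ∀ v ∈ r.support,
      (∃ w ∈ p.support, Γ.dist v w ≤ δ) ∨ (∃ w ∈ q.support, Γ.dist v w ≤ δ)

end GM

namespace GM

variable {G : Type} [Group G] {ι : Type}

/-- The graph `H(m)`: the full subgraph of the Groves–Manning space on the vertices of
depth exactly `m` in the horoball over `t • (P i)` (its edges are the horizontal edges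
at depth `m`). -/
def levelGraph (S : Set G) (P : ι → Subgroup G) (i : ι) (t : G) (m : ℕ) :
    SimpleGraph (GMVert G ι) where
  Adj v w := (GMGraph S P).Adj v w ∧ v ∈ horoball P i t ∧ w ∈ horoball P i t ∧
    depth v = m ∧ depth w = m
  symm := ⟨by rintro v w ⟨h1, h2, h3, h4, h5⟩; exact ⟨h1.symm, h3, h2, h5, h4⟩⟩
  loopless := ⟨fun v h => (GMGraph S P).loopless.irrefl v h.1⟩

/-- `d^m(z,·)`-ball: `B̂_n(z)` is the set of vertices `v` of `H(m)` with `d^m(v,z) ≤ n`,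
where `d^m` is the edge-path distance in the graph `H(m)`. -/
def hatB (S : Set G) (P : ι → Subgroup G) (i : ι) (t : G) (m : ℕ)
    (z : GMVert G ι) (n : ℕ) : Set (GMVert G ι) :=
  {v | v ∈ horoSphere P i t m ∧ (levelGraph S P i t m).Reachable z v ∧
    (levelGraph S P i t m).dist z v ≤ n}

end GM

/-!
Write `z = (a, m)` and `t = (b, m)`. If `a ≠ b`, climbing from `z` by `D = d_P(a, b)` levels,
crossing by one horizontal edge at depth `m + D` and descending to `t` gives two geodesic sides
of a triangle lying in the horoball at depth `≥ m`. As `m ≥ δ`, slimness keeps every geodesic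
from `z` to `t` inside the horoball. Along a walk in the horoball whose depth stays `≤ h`, each
step moves the base by at most `2 ^ h` in the coset graph, and returning from depth `h` to `m`
at both ends costs `2 (h - m)` vertical steps, so `d_P(a, b) + 2 (h - m) 2 ^ h ≤ d(z, t) 2 ^ h`
for some `h ≥ m`. Hence `d(z, t) ≤ 2n + 3` (resp. `2n + 2`) forces `d_P(a, b) ≤ 3·2^n·2^m`
(resp. `2^(n+1)·2^m`), and cutting a coset geodesic into pieces of length `2 ^ m` gives a path
in `H(m)` of the required length.
-/

open SimpleGraph

namespace GM

variable {G ι : Type} {i : ι}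

@[simp]
lemma depth_atLevel (x : G) (l : ℕ) : depth (atLevel i x l : GMVert G ι) = l := by
  cases l <;> rfl

@[simp]
lemma baseElt_atLevel (x : G) (l : ℕ) : baseElt (atLevel i x l : GMVert G ι) = x := by
  cases l <;> rfl

variable [Group G] {S : Set G} {P : ι → Subgroup G} {g : G}

section Coset

variable {H : Subgroup G} {a b : G}

lemma inv_mul_mem_of_inv_mul_mem (ha : g⁻¹ * a ∈ H) (hb : g⁻¹ * b ∈ H) : a⁻¹ * b ∈ H := by
  simpa [mul_assoc] using H.mul_mem (H.inv_mem ha) hb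

lemma inv_mul_mem_trans (ha : g⁻¹ * a ∈ H) (hab : a⁻¹ * b ∈ H) : g⁻¹ * b ∈ H := by
  simpa [mul_assoc] using H.mul_mem ha hab

lemma inv_mul_mem_of_reachable (h : (cosetGraph S P i).Reachable a b) : a⁻¹ * b ∈ P i := by
  obtain ⟨p⟩ := h
  induction p with
  | nil => simp
  | cons hadj _ ih => simpa [mul_assoc] using (P i).mul_mem hadj.2 ih

lemma cosetGraph_reachable_mul (hP : Subgroup.closure (S ∩ P i) = P i) {x : G} (hx : x ∈ P i)
    (a : G) : (cosetGraph S P i).Reachable a (a * x) := by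
  rw [← hP] at hx
  induction hx using Subgroup.closure_induction generalizing a with
  | mem s hs =>
    by_cases hs1 : s = 1
    · simp [hs1]
    · exact Adj.reachable ⟨⟨by simpa using hs1, Or.inl (by simpa using hs.1)⟩, by simpa using hs.2⟩
  | one => simp
  | mul x y _ _ hx hy => simpa [mul_assoc] using (hx a).trans (hy (a * x))
  | inv x _ hx => simpa using (hx (a * x⁻¹)).symm

lemma cosetGraph_reachable_of_inv_mul_mem (hP : Subgroup.closure (S ∩ P i) = P i)
    (hab : a⁻¹ * b ∈ P i) : (cosetGraph S P i).Reachable a b := by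
  simpa using cosetGraph_reachable_mul hP hab a

end Coset

section Vertices

variable {x : G}

lemma atLevel_mem_horoball (hx : g⁻¹ * x ∈ P i) (l : ℕ) :
    (atLevel i x l : GMVert G ι) ∈ horoball P i g := by
  cases l
  exacts [hx, ⟨rfl, hx⟩]

lemma exists_eq_atLevel_of_mem_horoSphere {m : ℕ} {z : GMVert G ι}
    (hz : z ∈ horoSphere P i g m) : ∃ x, g⁻¹ * x ∈ P i ∧ z = atLevel i x m := by
  obtain ⟨hzH, rfl⟩ := hz
  rcases z with x | ⟨j, x, ⟨_ | k, hk⟩⟩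
  · exact ⟨x, hzH, rfl⟩
  · exact absurd hk (lt_irrefl 0)
  · obtain ⟨rfl, hx⟩ := hzH
    exact ⟨x, hx, rfl⟩

end Vertices

section Adjacency

variable {u w : GMVert G ι}

lemma adj_atLevel_succ (x : G) (l : ℕ) :
    (GMGraph S P).Adj (atLevel i x l) (atLevel i x (l + 1)) := by
  cases l
  exacts [⟨rfl, rfl⟩, ⟨rfl, Or.inl ⟨rfl, Or.inl rfl⟩⟩]

lemma depth_le_depth_add_one_of_adj (h : (GMGraph S P).Adj u w) : depth w ≤ depth u + 1 := by
  rcases u with a | ⟨j, a, k⟩ <;> rcases w with b | ⟨j', b, l⟩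
  · exact Nat.le_succ 0
  · simp [depth, h.2]
  · exact Nat.zero_le _
  · rcases h.2 with ⟨-, h | h⟩ | ⟨h, -⟩ <;> simp only [depth] <;> omega

lemma baseElt_eq_of_adj_of_depth_lt (h : (GMGraph S P).Adj u w) (hd : depth w < depth u) :
    baseElt u = baseElt w := by
  rcases u with a | ⟨j, a, k⟩ <;> rcases w with b | ⟨j', b, l⟩
  · exact absurd hd (lt_irrefl 0)
  · exact absurd hd (Nat.not_lt_zero _)
  · exact h.1
  · rcases h.2 with ⟨h, -⟩ | ⟨h, -⟩
    · exact h
    · simp only [depth] at hd; omega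

lemma mem_horoball_of_adj (hw : w ∈ horoball P i g) (hd : 1 ≤ depth w)
    (h : (GMGraph S P).Adj u w) : u ∈ horoball P i g := by
  rcases w with b | ⟨j, b, l⟩
  · exact absurd hd (by simp [depth])
  obtain ⟨rfl, hb⟩ := hw
  rcases u with a | ⟨j', a, k⟩
  · obtain ⟨rfl, -⟩ := h
    exact hb
  · obtain ⟨rfl, ⟨rfl, -⟩ | ⟨-, hh⟩⟩ := h
    · exact ⟨rfl, hb⟩
    · exact ⟨rfl, by simpa using inv_mul_mem_trans hb (by simpa using (P j').inv_mem hh.2.1)⟩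

end Adjacency

section Horoball

variable {u w : GMVert G ι}

lemma adj_vertical_or_horizontal (hu : u ∈ horoball P i g) (hw : w ∈ horoball P i g)
    (h : (GMGraph S P).Adj u w) :
    (baseElt u = baseElt w ∧ (depth w = depth u + 1 ∨ depth u = depth w + 1)) ∨
      (depth u = depth w ∧ (cosetGraph S P i).Reachable (baseElt u) (baseElt w) ∧
        (cosetGraph S P i).dist (baseElt u) (baseElt w) ≤ 2 ^ depth u) := by
  rcases u with a | ⟨j, a, k⟩ <;> rcases w with b | ⟨j', b, l⟩
  · have hadj : (cosetGraph S P i).Adj a b := ⟨h, inv_mul_mem_of_inv_mul_mem hu hw⟩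
    exact Or.inr ⟨rfl, hadj.reachable, by simpa [depth, baseElt] using dist_le hadj.toWalk⟩
  · exact Or.inl ⟨h.1, Or.inl (by simp [depth, h.2])⟩
  · exact Or.inl ⟨h.1, Or.inr (by simp [depth, h.2])⟩
  · obtain ⟨rfl, -⟩ := hu
    obtain ⟨rfl, ⟨rfl, hv⟩ | ⟨hkl, hh⟩⟩ := h
    · exact Or.inl ⟨rfl, by simpa [depth] using hv⟩
    · exact Or.inr ⟨by simpa [depth] using hkl, hh.2.2.1, hh.2.2.2⟩

lemma levelGraph_adj_atLevel {m : ℕ} {a b : G} (ha : g⁻¹ * a ∈ P i) (hne : a ≠ b)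
    (hr : (cosetGraph S P i).Reachable a b) (hd : (cosetGraph S P i).dist a b ≤ 2 ^ m) :
    (levelGraph S P i g m).Adj (atLevel i a m) (atLevel i b m) := by
  have hab := inv_mul_mem_of_reachable hr
  refine ⟨?_, atLevel_mem_horoball ha m, atLevel_mem_horoball (inv_mul_mem_trans ha hab) m,
    depth_atLevel a m, depth_atLevel b m⟩
  cases m with
  | zero =>
    have hd1 : (cosetGraph S P i).dist a b = 1 := le_antisymm hd (hr.pos_dist_of_ne hne)
    exact (dist_eq_one_iff_adj.mp hd1).1
  | succ m => exact ⟨rfl, Or.inr ⟨rfl, hne, hab, hr, hd⟩⟩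

end Horoball

section Walks

variable {u w : GMVert G ι}

lemma depth_le_depth_add_length (p : (GMGraph S P).Walk u w) : depth w ≤ depth u + p.length := by
  induction p with
  | nil => simp
  | cons h _ ih =>
    have := depth_le_depth_add_one_of_adj h
    simp only [Walk.length_cons]
    omega

lemma depth_le_depth_add_dist (h : (GMGraph S P).Reachable u w) :
    depth w ≤ depth u + (GMGraph S P).dist u w := by
  obtain ⟨p, hp⟩ := h.exists_walk_length_eq_dist
  exact hp ▸ depth_le_depth_add_length p

lemma baseElt_eq_of_length_add_depth_le (p : (GMGraph S P).Walk u w)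
    (h : p.length + depth w ≤ depth u) : baseElt u = baseElt w := by
  induction p with
  | nil => rfl
  | cons hadj p ih =>
    have hdp := depth_le_depth_add_length p.reverse
    have hdu := depth_le_depth_add_one_of_adj hadj.symm
    simp only [Walk.length_cons, Walk.length_reverse] at h hdp
    rw [baseElt_eq_of_adj_of_depth_lt hadj (by omega), ih (by omega)]

lemma mem_horoball_of_walk {m : ℕ} (p : (GMGraph S P).Walk u w) (hw : w ∈ horoDeep P i g m)
    (hp : p.length ≤ m) : u ∈ horoball P i g := by
  induction p with
  | nil => exact hw.1
  | cons hadj p ih =>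
    have := depth_le_depth_add_length p
    have := hw.2
    simp only [Walk.length_cons] at hp
    exact mem_horoball_of_adj (ih hw (by omega)) (by omega) hadj

lemma mem_horoball_of_dist_le {m : ℕ} (hr : (GMGraph S P).Reachable u w)
    (hw : w ∈ horoDeep P i g m) (hd : (GMGraph S P).dist u w ≤ m) : u ∈ horoball P i g := by
  obtain ⟨p, hp⟩ := hr.exists_walk_length_eq_dist
  exact mem_horoball_of_walk p hw (hp ▸ hd)

end Walks

section Triangle

def verticalWalk (S : Set G) (P : ι → Subgroup G) (i : ι) (x : G) (l : ℕ) :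
    (k : ℕ) → (GMGraph S P).Walk (atLevel i x l) (atLevel i x (l + k))
  | 0 => .nil
  | k + 1 => (verticalWalk S P i x l k).concat (adj_atLevel_succ x (l + k))

@[simp]
lemma length_verticalWalk (x : G) (l k : ℕ) : (verticalWalk S P i x l k).length = k := by
  induction k with
  | zero => rfl
  | succ k ih => simp [verticalWalk, ih]

lemma mem_horoDeep_of_mem_support_verticalWalk {x : G} (hx : g⁻¹ * x ∈ P i) {l k : ℕ}
    {v : GMVert G ι} (hv : v ∈ (verticalWalk S P i x l k).support) : v ∈ horoDeep P i g l := by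
  induction k with
  | zero =>
    obtain rfl : v = atLevel i x (l + 0) := by simpa [verticalWalk] using hv
    exact ⟨atLevel_mem_horoball hx _, by simp⟩
  | succ k ih =>
    rw [verticalWalk, Walk.support_concat, List.mem_append,
      List.mem_singleton] at hv
    rcases hv with hv | rfl
    · exact ih hv
    · exact ⟨atLevel_mem_horoball hx _, by simp⟩

lemma isGeodesic_of_length_le_dist {V : Type} {Γ : SimpleGraph V} {a b : V} {p : Γ.Walk a b}
    (h : p.length ≤ Γ.dist a b) : IsGeodesic Γ p :=
  le_antisymm h (dist_le p)

lemma isGeodesic_verticalWalk (x : G) (l k : ℕ) :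
    IsGeodesic (GMGraph S P) (verticalWalk S P i x l k) := by
  apply isGeodesic_of_length_le_dist
  have := depth_le_depth_add_dist (verticalWalk S P i x l k).reachable
  simp only [depth_atLevel, length_verticalWalk] at this ⊢
  omega

lemma support_subset_horoball_of_slimTriangles {δ m : ℕ} (hhyp : SlimTriangles (GMGraph S P) δ)
    (hδm : δ ≤ m) {a b c : GMVert G ι} {p : (GMGraph S P).Walk a b} {q : (GMGraph S P).Walk b c}
    {r : (GMGraph S P).Walk a c} (hp : IsGeodesic _ p) (hq : IsGeodesic _ q) (hr : IsGeodesic _ r)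
    (hpH : ∀ w ∈ p.support, w ∈ horoDeep P i g m) (hqH : ∀ w ∈ q.support, w ∈ horoDeep P i g m) :
    ∀ v ∈ r.support, v ∈ horoball P i g := by
  classical
  intro v hv
  have hva : (GMGraph S P).Reachable v a := (r.takeUntil v hv).reachable.symm
  rcases hhyp p q r hp hq hr v hv with ⟨w, hw, hd⟩ | ⟨w, hw, hd⟩
  · exact mem_horoball_of_dist_le (hva.trans (p.takeUntil w hw).reachable) (hpH w hw)
      (hd.trans hδm)
  · exact mem_horoball_of_dist_le ((hva.trans p.reachable).trans (q.takeUntil w hw).reachable)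
      (hqH w hw) (hd.trans hδm)

lemma exists_isGeodesic_support_subset_horoball (hP : Subgroup.closure (S ∩ P i) = P i)
    {δ m : ℕ} (hhyp : SlimTriangles (GMGraph S P) δ) (hδm : δ ≤ m) {a b : G}
    (ha : g⁻¹ * a ∈ P i) (hb : g⁻¹ * b ∈ P i) :
    ∃ r : (GMGraph S P).Walk (atLevel i a m) (atLevel i b m),
      IsGeodesic (GMGraph S P) r ∧ ∀ v ∈ r.support, v ∈ horoball P i g := by
  obtain rfl | hne := eq_or_ne a b
  · exact ⟨.nil, by simp [IsGeodesic], by simpa using atLevel_mem_horoball ha m⟩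
  have hreach := cosetGraph_reachable_of_inv_mul_mem hP (inv_mul_mem_of_inv_mul_mem ha hb)
  set D := (cosetGraph S P i).dist a b
  have hD : D ≤ 2 ^ (m + D) :=
    Nat.lt_two_pow_self.le.trans (Nat.pow_le_pow_right two_pos (Nat.le_add_left D m))
  let q := Walk.cons (levelGraph_adj_atLevel ha hne hreach hD).1
    (verticalWalk S P i b m D).reverse
  have hq : IsGeodesic (GMGraph S P) q := by
    apply isGeodesic_of_length_le_dist
    by_contra! hlt
    have hd := depth_le_depth_add_dist q.reachable.symm
    obtain ⟨ω, hω⟩ := q.reachable.exists_walk_length_eq_dist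
    rw [dist_comm] at hd
    simp only [q, Walk.length_cons, Walk.length_reverse, length_verticalWalk,
      depth_atLevel] at hlt hd
    exact hne (by simpa using baseElt_eq_of_length_add_depth_le ω (by simp; omega))
  obtain ⟨r, hr⟩ := ((verticalWalk S P i a m D).append q).reachable.exists_walk_length_eq_dist
  refine ⟨r, hr, support_subset_horoball_of_slimTriangles hhyp hδm
    (isGeodesic_verticalWalk a m D) hq hr (fun w hw ↦ ?_) (fun w hw ↦ ?_)⟩
  · exact mem_horoDeep_of_mem_support_verticalWalk ha hw
  · rw [Walk.support_cons, List.mem_cons, Walk.support_reverse, List.mem_reverse] at hw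
    rcases hw with rfl | hw
    · exact ⟨atLevel_mem_horoball ha _, by simp⟩
    · exact mem_horoDeep_of_mem_support_verticalWalk hb hw

end Triangle

section Counting

lemma exists_cosetWalk_length_add_le {u w : GMVert G ι} (p : (GMGraph S P).Walk u w)
    (hp : ∀ v ∈ p.support, v ∈ horoball P i g) :
    ∃ h, depth u ≤ h ∧ depth w ≤ h ∧ ∃ c : (cosetGraph S P i).Walk (baseElt u) (baseElt w),
      c.length + (h - depth u + (h - depth w)) * 2 ^ h ≤ p.length * 2 ^ h := by
  induction p with
  | @nil v => exact ⟨depth v, le_rfl, le_rfl, .nil, by simp⟩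
  | @cons u v w hadj p ih =>
    obtain ⟨h, hvh, hwh, c, hc⟩ := ih fun x hx ↦ hp x (by simp [hx])
    have hpow : 0 < 2 ^ h := Nat.two_pow_pos h
    simp only [Walk.length_cons]
    rcases adj_vertical_or_horizontal (hp u (by simp)) (hp v (by simp)) hadj with
      ⟨hbase, hvert⟩ | ⟨hdepth, hreach, hdist⟩
    · rcases le_or_gt (depth u) h with huh | hhu
      · refine ⟨h, huh, hwh, c.copy hbase.symm rfl, ?_⟩
        have hle : h - depth u ≤ h - depth v + 1 := by omega
        rw [Walk.length_copy]
        nlinarith [Nat.mul_le_mul_right (2 ^ h) hle]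
      · -- `depth u = h + 1`: at the scale `2 ^ (h + 1)` the doubled old bound pays for the step
        have hu : h + 1 - depth u = 0 := by omega
        have hw : h + 1 - depth w = h - depth w + 1 := by omega
        refine ⟨h + 1, by omega, by omega, c.copy hbase.symm rfl, ?_⟩
        rw [Walk.length_copy, hu, hw, pow_succ]
        nlinarith
    · obtain ⟨e, he⟩ := hreach.exists_walk_length_eq_dist
      have he' : e.length ≤ 2 ^ h :=
        he ▸ hdist.trans (Nat.pow_le_pow_right two_pos (hdepth ▸ hvh))
      refine ⟨h, hdepth ▸ hvh, hwh, e.append c, ?_⟩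
      rw [Walk.length_append, hdepth]
      nlinarith

lemma levelGraph_reachable_dist_le_of_cosetWalk {m : ℕ} {a b : G} (ha : g⁻¹ * a ∈ P i)
    (c : (cosetGraph S P i).Walk a b) {q : ℕ} (hc : c.length ≤ q * 2 ^ m) :
    (levelGraph S P i g m).Reachable (atLevel i a m) (atLevel i b m) ∧
      (levelGraph S P i g m).dist (atLevel i a m) (atLevel i b m) ≤ q := by
  induction q generalizing a with
  | zero =>
    obtain rfl := c.eq_of_length_eq_zero (by simpa using hc)
    simp
  | succ q ih =>
    set a' := c.getVert (2 ^ m)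
    have ha' : g⁻¹ * a' ∈ P i :=
      inv_mul_mem_trans ha (inv_mul_mem_of_reachable (c.take (2 ^ m)).reachable)
    obtain ⟨hr, hd⟩ := ih ha' (c.drop (2 ^ m)) (by rw [add_mul] at hc; simp; omega)
    have hfirst : (levelGraph S P i g m).Reachable (atLevel i a m) (atLevel i a' m) ∧
        (levelGraph S P i g m).dist (atLevel i a m) (atLevel i a' m) ≤ 1 := by
      obtain h | h := eq_or_ne a a'
      · rw [← h]; simp
      · have hadj := levelGraph_adj_atLevel (m := m) ha h (c.take (2 ^ m)).reachable
          ((dist_le (c.take (2 ^ m))).trans (by simp))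
        exact ⟨hadj.reachable, (dist_eq_one_iff_adj.mpr hadj).le⟩
    exact ⟨hfirst.1.trans hr, (hfirst.1.dist_triangle_left _).trans (by omega)⟩

lemma levelGraph_reachable_dist_le (hP : Subgroup.closure (S ∩ P i) = P i) {δ m : ℕ}
    (hhyp : SlimTriangles (GMGraph S P) δ) (hδm : δ ≤ m) {z t : GMVert G ι}
    (hz : z ∈ horoSphere P i g m) (ht : t ∈ horoSphere P i g m) {q : ℕ}
    (hq : ∀ k, (GMGraph S P).dist z t * 2 ^ k ≤ q + 2 * k * 2 ^ k) :
    (levelGraph S P i g m).Reachable z t ∧ (levelGraph S P i g m).dist z t ≤ q := by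
  obtain ⟨a, ha, rfl⟩ := exists_eq_atLevel_of_mem_horoSphere hz
  obtain ⟨b, hb, rfl⟩ := exists_eq_atLevel_of_mem_horoSphere ht
  obtain ⟨r, hr, hrH⟩ := exists_isGeodesic_support_subset_horoball hP hhyp hδm ha hb
  obtain ⟨h, hmh, -, c, hc⟩ := exists_cosetWalk_length_add_le r hrH
  simp only [depth_atLevel] at hmh hc
  obtain ⟨k, rfl⟩ := Nat.exists_eq_add_of_le hmh
  refine levelGraph_reachable_dist_le_of_cosetWalk ha (c.copy (by simp) (by simp)) ?_
  rw [hr, Nat.add_sub_cancel_left, pow_add] at hc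
  rw [Walk.length_copy]
  nlinarith [Nat.mul_le_mul_right (2 ^ m) (hq k), Nat.two_pow_pos k]

end Counting

lemma two_mul_add_three_mul_two_pow_le (n k : ℕ) :
    (2 * n + 3) * 2 ^ k ≤ 3 * 2 ^ n + 2 * k * 2 ^ k := by
  rcases le_or_gt k n with hk | hk
  · obtain ⟨j, rfl⟩ := Nat.exists_eq_add_of_le hk
    have : j < 2 ^ j := Nat.lt_two_pow_self
    rw [pow_add]
    nlinarith [Nat.two_pow_pos k]
  · rcases (show 2 * n + 3 ≤ 2 * k ∨ k = n + 1 by omega) with h | rfl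
    · nlinarith [Nat.mul_le_mul_right (2 ^ k) h, Nat.two_pow_pos n]
    · rw [pow_succ]
      nlinarith [Nat.two_pow_pos n]

lemma two_mul_add_two_mul_two_pow_le (n k : ℕ) :
    (2 * n + 2) * 2 ^ k ≤ 2 ^ (n + 1) + 2 * k * 2 ^ k := by
  rcases le_or_gt k n with hk | hk
  · obtain ⟨j, rfl⟩ := Nat.exists_eq_add_of_le hk
    have : j < 2 ^ j := Nat.lt_two_pow_self
    rw [pow_succ, pow_add]
    nlinarith [Nat.two_pow_pos k]
  · nlinarith [Nat.mul_le_mul_right (2 ^ k) (show 2 * n + 2 ≤ 2 * k by omega),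
      Nat.two_pow_pos (n + 1)]

end GM

open GM in
theorem statement_4_general {G : Type} [Group G] {ι : Type}
    (S : Finset G) (P : ι → Subgroup G)
    (hPgen : ∀ i, Subgroup.closure ((S : Set G) ∩ (P i : Set G)) = P i)
    (δ : ℕ) (hhyp : SlimTriangles (GMGraph (S : Set G) P) δ)
    (i : ι) (g : G) (m : ℕ) (hm : δ ≤ m) :
    (∀ n : ℕ, ∀ z t : GMVert G ι, z ∈ horoSphere P i g m → t ∈ horoSphere P i g m →
      (GMGraph (S : Set G) P).dist z t ≤ 2 * n + 3 →
        (levelGraph (S : Set G) P i g m).Reachable z t ∧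
          (levelGraph (S : Set G) P i g m).dist z t ≤ 3 * 2 ^ n) ∧
    (∀ n : ℕ, ∀ z t : GMVert G ι, z ∈ horoSphere P i g m → t ∈ horoSphere P i g m →
      (GMGraph (S : Set G) P).dist z t ≤ 2 * n + 2 →
        (levelGraph (S : Set G) P i g m).Reachable z t ∧
          (levelGraph (S : Set G) P i g m).dist z t ≤ 2 ^ (n + 1)) ∧
    (∀ n : ℕ, ∀ z : GMVert G ι, z ∈ horoSphere P i g m →
      gball (S : Set G) P z (2 * n + 3) ∩ horoSphere P i g m ⊆
        hatB (S : Set G) P i g m z (3 * 2 ^ n)) ∧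
    (∀ n : ℕ, ∀ z : GMVert G ι, z ∈ horoSphere P i g m →
      gball (S : Set G) P z (2 * n + 2) ∩ horoSphere P i g m ⊆
        hatB (S : Set G) P i g m z (2 ^ (n + 1))) ∧
    (∀ k : ℕ, 0 < k → ∀ z : GMVert G ι, z ∈ horoSphere P i g m →
      gball (S : Set G) P z k ∩ horoSphere P i g m ⊆
        hatB (S : Set G) P i g m z (2 ^ (k / 2 + 1))) := by
  have odd_case : ∀ n z t, z ∈ horoSphere P i g m → t ∈ horoSphere P i g m →
      (GMGraph (S : Set G) P).dist z t ≤ 2 * n + 3 →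
        (levelGraph (S : Set G) P i g m).Reachable z t ∧
          (levelGraph (S : Set G) P i g m).dist z t ≤ 3 * 2 ^ n :=
    fun n _ _ hz ht hd ↦ levelGraph_reachable_dist_le (hPgen i) hhyp hm hz ht fun k ↦
      (Nat.mul_le_mul_right _ hd).trans (two_mul_add_three_mul_two_pow_le n k)
  have even_case : ∀ n z t, z ∈ horoSphere P i g m → t ∈ horoSphere P i g m →
      (GMGraph (S : Set G) P).dist z t ≤ 2 * n + 2 →
        (levelGraph (S : Set G) P i g m).Reachable z t ∧
          (levelGraph (S : Set G) P i g m).dist z t ≤ 2 ^ (n + 1) :=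
    fun n _ _ hz ht hd ↦ levelGraph_reachable_dist_le (hPgen i) hhyp hm hz ht fun k ↦
      (Nat.mul_le_mul_right _ hd).trans (two_mul_add_two_mul_two_pow_le n k)
  refine ⟨odd_case, even_case, ?_, ?_, ?_⟩
  · exact fun n z hz v ⟨hv, hvH⟩ ↦ ⟨hvH, odd_case n z v hz hvH hv⟩
  · exact fun n z hz v ⟨hv, hvH⟩ ↦ ⟨hvH, even_case n z v hz hvH hv⟩
  · intro k _ z hz v ⟨hv, hvH⟩
    exact ⟨hvH, even_case (k / 2) z v hz hvH ((show _ ≤ k from hv).trans (by omega))⟩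

open GM in
/-- Suppose `z` and `t` are vertices of a horoball `H` of the
Groves–Manning space `X` with `𝒟(z) = 𝒟(t) = m ≥ δ`.  If `d(z,t) ≤ 2n + 3` then
`d^m(z,t) ≤ 3·2^n`, and if `d(z,t) ≤ 2n + 2` then `d^m(z,t) ≤ 2^(n+1)`; consequently
`B_{2n+3}(z) ∩ H(m) ⊆ B̂_{3·2^n}(z)` and `B_{2n+2}(z) ∩ H(m) ⊆ B̂_{2^(n+1)}(z)`.
In particular, for any integer `k > 0`, `B_k(z) ∩ H(m) ⊆ B̂_{2^(⌊k/2⌋+1)}(z)`. -/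
theorem statement_4 {G : Type} [Group G] {ι : Type} [Fintype ι]
    (S : Finset G) (P : ι → Subgroup G)
    (hSgen : Subgroup.closure (S : Set G) = ⊤)
    (hPgen : ∀ i, Subgroup.closure ((S : Set G) ∩ (P i : Set G)) = P i)
    (hProper : ∀ i, P i ≠ ⊤)
    (δ : ℕ) (hδ : 1 ≤ δ) (hhyp : SlimTriangles (GMGraph (S : Set G) P) δ)
    (i : ι) (g : G) (m : ℕ) (hm : δ ≤ m) :
    (∀ n : ℕ, ∀ z t : GMVert G ι, z ∈ horoSphere P i g m → t ∈ horoSphere P i g m →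
      (GMGraph (S : Set G) P).dist z t ≤ 2 * n + 3 →
        (levelGraph (S : Set G) P i g m).Reachable z t ∧
          (levelGraph (S : Set G) P i g m).dist z t ≤ 3 * 2 ^ n) ∧
    (∀ n : ℕ, ∀ z t : GMVert G ι, z ∈ horoSphere P i g m → t ∈ horoSphere P i g m →
      (GMGraph (S : Set G) P).dist z t ≤ 2 * n + 2 →
        (levelGraph (S : Set G) P i g m).Reachable z t ∧
          (levelGraph (S : Set G) P i g m).dist z t ≤ 2 ^ (n + 1)) ∧
    (∀ n : ℕ, ∀ z : GMVert G ι, z ∈ horoSphere P i g m →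
      gball (S : Set G) P z (2 * n + 3) ∩ horoSphere P i g m ⊆
        hatB (S : Set G) P i g m z (3 * 2 ^ n)) ∧
    (∀ n : ℕ, ∀ z : GMVert G ι, z ∈ horoSphere P i g m →
      gball (S : Set G) P z (2 * n + 2) ∩ horoSphere P i g m ⊆
        hatB (S : Set G) P i g m z (2 ^ (n + 1))) ∧
    (∀ k : ℕ, 0 < k → ∀ z : GMVert G ι, z ∈ horoSphere P i g m →
      gball (S : Set G) P z k ∩ horoSphere P i g m ⊆
        hatB (S : Set G) P i g m z (2 ^ (k / 2 + 1))) :=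
  statement_4_general S P hPgen δ hhyp i g m hm
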